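/- Let n > 0 and 0 < T ≤ n be reals, and let y, z : ℝ → ℝ be continuous on [0,T] and differentiable on [0,T) with y(0) = n, z(0) = 0, and for all t ∈ [0,T): y(t) + z(t) > 0, y′(t) = −y(t)/(y(t)+z(t)) − 1, and z′(t) = 2y(t)/(y(t)+z(t)). If y(t) > 0 for all t ∈ [0,T) and y(T) = 0, then T = (1 − 2^{−1/2}·e^{−π/4})·n. -/

import Mathlib

open Set Real Filter Topology


/-- If `y, z` are continuous on `[0, T]`, solve `y′ = -y/(y+z) - 1`, `z′ = 2y/(y+z)` on
`[0, T)` with `y(0) = n`, `z(0) = 0`, `y > 0` on `[0, T)` and `y(T) = 0`, then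
`T = (1 - 2^{-1/2} e^{-π/4}) n`. -/
theorem hitting_time (n T : ℝ) (hn : 0 < n) (hT : 0 < T) (hTn : T ≤ n)
    (y z : ℝ → ℝ)
    (hyc : ContinuousOn y (Set.Icc 0 T)) (hzc : ContinuousOn z (Set.Icc 0 T))
    (hy0 : y 0 = n) (hz0 : z 0 = 0)
    (hpos : ∀ t ∈ Set.Ico (0 : ℝ) T, 0 < y t + z t)
    (hy' : ∀ t ∈ Set.Ico (0 : ℝ) T,
      HasDerivWithinAt y (-(y t) / (y t + z t) - 1) (Set.Ico 0 T) t)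
    (hz' : ∀ t ∈ Set.Ico (0 : ℝ) T,
      HasDerivWithinAt z (2 * y t / (y t + z t)) (Set.Ico 0 T) t)
    (hypos : ∀ t ∈ Set.Ico (0 : ℝ) T, 0 < y t) (hyT : y T = 0) :
    T = (1 - (Real.sqrt 2)⁻¹ * Real.exp (-(Real.pi / 4))) * n := by
  have hsc : ContinuousOn (fun t => y t + z t) (Icc 0 T) := hyc.add hzc
  have hs' : ∀ t ∈ Ico (0:ℝ) T, HasDerivWithinAt (fun u => y u + z u)
      (y t / (y t + z t) - 1) (Ico 0 T) t := by
    intro t ht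
    have h := (hy' t ht).add (hz' t ht)
    refine h.congr_deriv ?_
    have hb : y t + z t ≠ 0 := ne_of_gt (hpos t ht)
    field_simp
    ring
  -- linear conserved quantity: y + z/2 + t = n on [0,T]
  have hP : ∀ t ∈ Icc (0:ℝ) T, y t + z t / 2 + t = n := by
    have hcont : ContinuousOn (fun t => y t + z t / 2 + t) (Icc 0 T) :=
      (hyc.add (hzc.div_const 2)).add continuousOn_id
    have hderiv : ∀ x ∈ Ico (0:ℝ) T,
        HasDerivWithinAt (fun t => y t + z t / 2 + t) 0 (Ici x) x := by
      intro x hx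
      have h : HasDerivWithinAt (fun t => y t + z t / 2 + t)
          ((-(y x) / (y x + z x) - 1) + (2 * y x / (y x + z x)) / 2 + 1) (Ico 0 T) x :=
        ((hy' x hx).add ((hz' x hx).div_const 2)).add (hasDerivWithinAt_id x _)
      have hb : y x + z x ≠ 0 := ne_of_gt (hpos x hx)
      have hval : (-(y x) / (y x + z x) - 1) + (2 * y x / (y x + z x)) / 2 + 1 = 0 := by
        field_simp
        ring
      rw [hval] at h
      exact h.mono_of_mem_nhdsWithin (Ico_mem_nhdsGE_of_mem hx)
    intro t ht
    have := constant_of_has_deriv_right_zero hcont hderiv t ht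
    simpa [hy0, hz0] using this
  -- the nonlinear conserved quantity
  set G : ℝ → ℝ := fun t => (y t + z t) ^ 2 + (y t) ^ 2 with hGdef
  set F : ℝ → ℝ := fun t => (1/2) * Real.log (G t) - Real.arctan (y t / (y t + z t)) with hFdef
  have hGposIco : ∀ t ∈ Ico (0:ℝ) T, 0 < G t := by
    intro t ht
    have := hpos t ht
    have := hypos t ht
    simp only [hGdef]
    nlinarith
  have hF' : ∀ x ∈ Ico (0:ℝ) T, HasDerivWithinAt F 0 (Ico 0 T) x := by
    intro x hx
    have hb : 0 < y x + z x := hpos x hx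
    have hbne : y x + z x ≠ 0 := ne_of_gt hb
    have ha : 0 < y x := hypos x hx
    have hGpos : 0 < G x := hGposIco x hx
    have hG' : HasDerivWithinAt G
        ((2:ℕ) * (y x + z x) ^ 1 * (y x / (y x + z x) - 1)
          + (2:ℕ) * (y x) ^ 1 * (-(y x) / (y x + z x) - 1)) (Ico 0 T) x :=
      ((hs' x hx).pow 2).add ((hy' x hx).pow 2)
    have hlog := (Real.hasDerivAt_log (ne_of_gt hGpos)).comp_hasDerivWithinAt x hG'
    have hq := (hy' x hx).div (hs' x hx) hbne
    have harctan := (Real.hasDerivAt_arctan (y x / (y x + z x))).comp_hasDerivWithinAt x hq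
    have hF := (hlog.const_mul (1/2:ℝ)).sub harctan
    simp only [Function.comp] at hF
    refine hF.congr_deriv ?_
    have h1 : (0:ℝ) < 1 + (y x / (y x + z x))^2 := by positivity
    have hGx : G x = (y x + z x)^2 + (y x)^2 := rfl
    rw [hGx]
    field_simp
    ring
  -- F continuous on Ico
  have hsposIco := hpos
  have hFcontIco : ContinuousOn F (Ico 0 T) := by
    have hycI := hyc.mono Ico_subset_Icc_self
    have hscI := hsc.mono Ico_subset_Icc_self
    have hGc : ContinuousOn G (Ico 0 T) := (hscI.pow 2).add (hycI.pow 2)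
    exact ((hGc.log (fun t ht => ne_of_gt (hGposIco t ht))).const_smul (1/2:ℝ)).sub
      (Real.continuous_arctan.comp_continuousOn
        (hycI.div hscI (fun t ht => ne_of_gt (hpos t ht))))
  have hFIco : ∀ x ∈ Ico (0:ℝ) T, F x = F 0 := by
    intro x hx
    rcases eq_or_lt_of_le hx.1 with h0 | h0
    · rw [← h0]
    · have hsub : Icc (0:ℝ) x ⊆ Ico 0 T := fun u hu => ⟨hu.1, lt_of_le_of_lt hu.2 hx.2⟩
      exact constant_of_has_deriv_right_zero (hFcontIco.mono hsub)
        (fun u hu => by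
          have hu' : u ∈ Ico (0:ℝ) T := hsub ⟨hu.1, hu.2.le⟩
          exact (hF' u hu').mono_of_mem_nhdsWithin (Ico_mem_nhdsGE_of_mem hu'))
        x ⟨hx.1, le_refl x⟩
  -- value of z and s at T
  have hzT : y T + z T = 2 * (n - T) := by
    have h := hP T ⟨hT.le, le_refl T⟩
    rw [hyT] at h ⊢
    linarith
  -- s T > 0 via limit bound on G
  have hGcont : ContinuousOn G (Icc 0 T) := (hsc.pow 2).add (hyc.pow 2)
  have hGT : Real.exp (2 * F 0) ≤ G T := by
    haveI hne : (𝓝[Ico (0:ℝ) T] T).NeBot := by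
      rw [← mem_closure_iff_nhdsWithin_neBot, closure_Ico hT.ne]
      exact ⟨hT.le, le_refl T⟩
    have htend : Tendsto G (𝓝[Ico 0 T] T) (𝓝 (G T)) :=
      (hGcont T ⟨hT.le, le_refl T⟩).mono Ico_subset_Icc_self
    refine ge_of_tendsto htend ?_
    filter_upwards [self_mem_nhdsWithin] with t ht
    have hFt := hFIco t ht
    have hGpos := hGposIco t ht
    have harc : 0 ≤ Real.arctan (y t / (y t + z t)) := by
      rw [← Real.arctan_zero]
      exact Real.arctan_strictMono.monotone (div_nonneg (hypos t ht).le (hpos t ht).le)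
    have hFt' : (1/2) * Real.log (G t) - Real.arctan (y t / (y t + z t)) = F 0 := hFt
    have hlogGt : 2 * F 0 ≤ Real.log (G t) := by
      have e1 : Real.log (G t) = 2 * F 0 + 2 * Real.arctan (y t / (y t + z t)) := by
        rw [← hFt']; ring
      rw [e1]; linarith
    calc Real.exp (2 * F 0) ≤ Real.exp (Real.log (G t)) := Real.exp_le_exp.2 hlogGt
      _ = G t := Real.exp_log hGpos
  have hGTval : G T = (y T + z T) ^ 2 := by simp [hGdef, hyT]
  have hsTnonneg : 0 ≤ y T + z T := by rw [hzT]; linarith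
  have hsTpos : 0 < y T + z T := by
    rcases hsTnonneg.lt_or_eq with h | h
    · exact h
    · exfalso
      rw [hGTval, ← h] at hGT
      simp at hGT
      exact absurd hGT (not_le.2 (Real.exp_pos _))
  -- now F constant on all of [0,T]
  have hGposIcc : ∀ t ∈ Icc (0:ℝ) T, 0 < G t := by
    intro t ht
    rcases eq_or_lt_of_le ht.2 with h | h
    · rw [h, hGTval]; positivity
    · exact hGposIco t ⟨ht.1, h⟩
  have hsposIcc : ∀ t ∈ Icc (0:ℝ) T, 0 < y t + z t := by
    intro t ht
    rcases eq_or_lt_of_le ht.2 with h | h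
    · rw [h]; exact hsTpos
    · exact hpos t ⟨ht.1, h⟩
  have hFcont : ContinuousOn F (Icc 0 T) :=
    ((hGcont.log (fun t ht => ne_of_gt (hGposIcc t ht))).const_smul (1/2:ℝ)).sub
      (Real.continuous_arctan.comp_continuousOn
        (hyc.div hsc (fun t ht => ne_of_gt (hsposIcc t ht))))
  have hFT : F T = F 0 :=
    constant_of_has_deriv_right_zero hFcont
      (fun u hu => (hF' u hu).mono_of_mem_nhdsWithin (Ico_mem_nhdsGE_of_mem hu))
      T ⟨hT.le, le_refl T⟩
  -- compute F T and F 0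
  have hF0 : F 0 = Real.log (Real.sqrt 2 * n) - Real.pi / 4 := by
    have hs0 : y 0 + z 0 = n := by rw [hy0, hz0]; ring
    have hG0 : G 0 = 2 * n ^ 2 := by simp only [hGdef]; rw [hs0, hy0]; ring
    have hFm : F 0 = (1/2) * Real.log (G 0) - Real.arctan (y 0 / (y 0 + z 0)) := rfl
    rw [hFm, hG0, hs0, hy0, div_self hn.ne', Real.arctan_one]
    have hlog2 : Real.log (2 * n ^ 2) = Real.log 2 + 2 * Real.log n := by
      rw [Real.log_mul two_ne_zero (by positivity), Real.log_pow]
      push_cast; ring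
    have hlogs : Real.log (Real.sqrt 2 * n) = Real.log 2 / 2 + Real.log n := by
      rw [Real.log_mul (by positivity) hn.ne', Real.log_sqrt (by norm_num)]
    linarith
  have hFTval : F T = Real.log (y T + z T) := by
    have hFm : F T = (1/2) * Real.log (G T) - Real.arctan (y T / (y T + z T)) := rfl
    rw [hFm, hGTval]
    set w := y T + z T with hw
    rw [hyT, zero_div, Real.arctan_zero, sub_zero, Real.log_pow]
    push_cast; ring
  have hsT : y T + z T = Real.sqrt 2 * n * Real.exp (-(Real.pi / 4)) := by
    have h := hFTval.symm.trans (hFT.trans hF0)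
    have hpos2 : (0:ℝ) < Real.sqrt 2 * n := by positivity
    have h2 := congrArg Real.exp h
    rw [Real.exp_log hsTpos, Real.exp_sub, Real.exp_log hpos2] at h2
    rw [h2, Real.exp_neg, ← div_eq_mul_inv]
  -- finish
  have h2 : Real.sqrt 2 * Real.sqrt 2 = 2 := Real.mul_self_sqrt (by norm_num)
  have hs2ne : Real.sqrt 2 ≠ 0 := by positivity
  have hinv : Real.sqrt 2 * (Real.sqrt 2)⁻¹ = 1 := mul_inv_cancel₀ hs2ne
  have hkey : 2 * (n - T) = Real.sqrt 2 * n * Real.exp (-(Real.pi / 4)) := by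
    rw [← hzT]; exact hsT
  nlinarith [hkey, h2, hinv, Real.exp_pos (-(Real.pi / 4)), hn]
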